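/- arXiv:1110.6759 — 2 statements merged into one kernel-verified Lean document; each statement's English description precedes it below -/
import Mathlib

section
/- The infinite series ∑_{k=1}^∞ (k+1)!/(2k+1)!! converges to π/2. -/
open Filter Finset Real MeasureTheory intervalIntegral Nat

/-!
By the Beta integral and `(2k+1)! = (2k+1)‼ · 2^k k!`, the `k`-th term is
`∫₀¹ (k+1) (2x(1-x))^k dx`. As `0 ≤ 2x(1-x) ≤ 1/2` on `[0,1]`, the series `∑ (k+1) t^k = (1-t)⁻²`
can be integrated termwise, and `∫₀¹ (1 - 2x(1-x))⁻² dx = 1 + π/2` through the antiderivative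
`u/(1+u²) + arctan u` at `u = 2x - 1`. Dropping the term `k = 0`, which is `1`, leaves `π/2`.
-/

theorem integral_pow_mul_one_sub_pow (a b : ℕ) :
    ∫ x in (0 : ℝ)..1, x ^ a * (1 - x) ^ b = (a ! * b ! : ℝ) / (a + b + 1)! := by
  have h := Complex.betaIntegral_eq_Gamma_mul_div (a + 1) (b + 1)
    (by simp; positivity) (by simp; positivity)
  rw [show (a + 1 + (b + 1) : ℂ) = (a + b + 1 : ℕ) + 1 by push_cast; ring] at h
  simp only [Complex.Gamma_nat_eq_factorial, Complex.betaIntegral, add_sub_cancel_right,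
    Complex.cpow_natCast] at h
  apply Complex.ofReal_injective
  rw [← intervalIntegral.integral_ofReal]
  push_cast
  exact h

theorem factorial_succ_div_doubleFactorial_eq_integral (k : ℕ) :
    ((k + 1)! : ℝ) / (2 * k + 1)‼ = ∫ x in (0 : ℝ)..1, (k + 1) * (2 * x * (1 - x)) ^ k := by
  have h_fac : ((2 * k + 1)! : ℝ) = (2 * k + 1)‼ * (2 ^ k * k !) := by
    rw [factorial_eq_mul_doubleFactorial, doubleFactorial_two_mul]
    push_cast; ring
  simp_rw [show ∀ x : ℝ, (k + 1) * (2 * x * (1 - x)) ^ k = (k + 1) * 2 ^ k * (x ^ k * (1 - x) ^ k)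
    from fun x => by rw [mul_pow, mul_pow]; ring]
  rw [intervalIntegral.integral_const_mul, integral_pow_mul_one_sub_pow, ← two_mul, h_fac,
    factorial_succ]
  have : ((2 * k + 1)‼ : ℝ) ≠ 0 := by positivity
  push_cast
  field_simp

theorem hasDerivAt_div_one_add_sq_add_arctan (u : ℝ) :
    HasDerivAt (fun u => u / (1 + u ^ 2) + arctan u) (2 / (1 + u ^ 2) ^ 2) u := by
  have h : HasDerivAt (fun u : ℝ => 1 + u ^ 2) (2 * u) u := by
    simpa using (hasDerivAt_pow 2 u).const_add 1
  refine (((hasDerivAt_id' u).div h (by positivity)).add (hasDerivAt_arctan u)).congr_deriv ?_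
  field_simp
  ring

theorem integral_one_div_one_sub_two_mul_mul_one_sub_sq :
    ∫ x in (0 : ℝ)..1, 1 / (1 - 2 * x * (1 - x)) ^ 2 = 1 + π / 2 := by
  have h_pos (x : ℝ) : 0 < 1 - 2 * x * (1 - x) := by nlinarith [sq_nonneg (2 * x - 1)]
  have hG (x : ℝ) : HasDerivAt (fun x => (2 * x - 1) / (1 + (2 * x - 1) ^ 2) + arctan (2 * x - 1))
      (1 / (1 - 2 * x * (1 - x)) ^ 2) x := by
    have h := (hasDerivAt_div_one_add_sq_add_arctan (2 * x - 1)).comp x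
      (((hasDerivAt_id x).const_mul 2).sub_const 1)
    refine h.congr_deriv ?_
    rw [show 1 + (2 * x - 1) ^ 2 = 2 * (1 - 2 * x * (1 - x)) by ring]
    have := (h_pos x).ne'
    field_simp
  rw [integral_eq_sub_of_hasDerivAt (fun x _ => hG x)]
  · norm_num [arctan_one, arctan_neg]
    ring
  · exact (continuous_const.div (by fun_prop) fun x => (pow_pos (h_pos x) 2).ne').intervalIntegrable
      0 1

theorem hasSum_succ_mul_pow {𝕜 : Type*} [NormedDivisionRing 𝕜] [HasSummableGeomSeries 𝕜]
    {r : 𝕜} (hr : ‖r‖ < 1) : HasSum (fun k : ℕ => (k + 1) * r ^ k) (1 / (1 - r) ^ 2) := by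
  simpa using hasSum_choose_mul_geometric_of_norm_lt_one 1 hr

theorem hasSum_factorial_succ_div_doubleFactorial :
    HasSum (fun k : ℕ => ((k + 1)! : ℝ) / (2 * k + 1)‼) (1 + π / 2) := by
  have h_mem {x : ℝ} (hx : x ∈ Set.uIoc 0 1) : 0 ≤ 2 * x * (1 - x) ∧ 2 * x * (1 - x) ≤ 1 / 2 := by
    rw [Set.uIoc_of_le zero_le_one] at hx
    constructor <;> nlinarith [hx.1, hx.2, sq_nonneg (2 * x - 1)]
  simp_rw [factorial_succ_div_doubleFactorial_eq_integral,
    ← integral_one_div_one_sub_two_mul_mul_one_sub_sq]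
  refine hasSum_integral_of_dominated_convergence (fun k _ => (k + 1) * (1 / 2 : ℝ) ^ k)
    (fun k => by fun_prop) ?_ ?_ intervalIntegrable_const ?_
  · refine fun k => ae_of_all _ fun x hx => ?_
    obtain ⟨h0, h1⟩ := h_mem hx
    rw [norm_mul, norm_pow, Real.norm_of_nonneg h0, Real.norm_of_nonneg (by positivity)]
    gcongr
  · exact ae_of_all _ fun x _ => (hasSum_succ_mul_pow (by norm_num)).summable
  · refine ae_of_all _ fun x hx => ?_
    obtain ⟨h0, h1⟩ := h_mem hx
    exact hasSum_succ_mul_pow (by rw [Real.norm_of_nonneg h0]; linarith)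

theorem stmt2 :
    Tendsto (fun N => ∑ k ∈ Ico 1 N,
      (Nat.factorial (k + 1) : ℝ) / (Nat.doubleFactorial (2 * k + 1) : ℝ))
      atTop (nhds (Real.pi / 2)) := by
  have h := hasSum_factorial_succ_div_doubleFactorial.tendsto_sum_nat.sub_const 1
  rw [add_sub_cancel_left] at h
  refine h.congr' ((eventually_ge_atTop 1).mono fun N hN => ?_)
  rw [range_eq_Ico, sum_eq_sum_Ico_succ_bot hN]
  simp
end

section
/- The infinite series ∑_{k=0}^∞ [(1)_k³/(3/2)_k³] · (3k+2)/4^k converges to π²/4. -/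
/-!
Wilf–Zeilberger method. Put `Φ(n, k) = (1)ₙ³ / ((3/2)ₙ³ 4ⁿ) · ((1/2)ₖ / (n + 3/2)ₖ)²`,
`F(n, k) = 2(2n + 1) Φ(n, k)` and `G(n, k) = (3n + 2k + 2) Φ(n, k)`. These form a WZ pair,
`F(n, k) - F(n + 1, k) = G(n, k) - G(n, k + 1)`, so summing over `k` telescopes to
`∑ₖ F(n, k) - ∑ₖ F(n + 1, k) = G(n, 0)`, which is the `n`-th term of the series. Summing over `n`,
the series equals `∑ₖ F(0, k) = 2 ∑ₖ 1/(2k + 1)² = π²/4`, provided `∑ₖ F(n, k) → 0`; this holds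
because `Φ(n, k) ≤ 4⁻ⁿ Φ(0, k)`.
-/

open Filter Finset Real

/-- Pochhammer symbol (rising factorial) for a real base and natural index. -/
noncomputable def poch (x : ℝ) (k : ℕ) : ℝ := ∏ i ∈ Finset.range k, (x + i)

open Topology

theorem tendsto_sum_range_of_wz {α : Type*} [AddCommGroup α] [TopologicalSpace α]
    [IsTopologicalAddGroup α] [T2Space α] {F G : ℕ → ℕ → α} (hF : ∀ n, Summable (F n))
    (hFG : ∀ n k, F n k - F (n + 1) k = G n k - G n (k + 1))
    (hG : ∀ n, Tendsto (G n) atTop (𝓝 0)) (hT : Tendsto (fun n ↦ ∑' k, F n k) atTop (𝓝 0)) :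
    Tendsto (fun N ↦ ∑ n ∈ range N, G n 0) atTop (𝓝 (∑' k, F 0 k)) := by
  have step (n : ℕ) : ∑' k, F n k - ∑' k, F (n + 1) k = G n 0 := by
    rw [← (hF n).tsum_sub (hF (n + 1))]
    refine tendsto_nhds_unique ((hF n).sub (hF (n + 1))).hasSum.tendsto_sum_nat ?_
    simp_rw [hFG, Finset.sum_range_sub']
    simpa using (hG n).const_sub (G n 0)
  have partial_sum (N : ℕ) : ∑ n ∈ range N, G n 0 = ∑' k, F 0 k - ∑' k, F N k := by
    simp_rw [← step, Finset.sum_range_sub' (fun n ↦ ∑' k, F n k)]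
  simpa [partial_sum] using hT.const_sub (∑' k, F 0 k)

theorem hasSum_one_div_odd_sq : HasSum (fun k : ℕ ↦ 1 / (2 * (k : ℝ) + 1) ^ 2) (π ^ 2 / 8) := by
  have hodd : Summable (fun k : ℕ ↦ 1 / (2 * (k : ℝ) + 1) ^ 2) := by
    have := hasSum_zeta_two.summable.comp_injective (i := fun k : ℕ ↦ 2 * k + 1)
      (fun a b h ↦ by simpa using h)
    simpa [Function.comp_def] using this
  have heven : HasSum (fun k : ℕ ↦ 1 / ((2 * k : ℕ) : ℝ) ^ 2) (1 / 4 * (π ^ 2 / 6)) := by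
    refine (hasSum_zeta_two.mul_left (1 / 4)).congr_fun fun k ↦ ?_
    push_cast
    ring
  have hsum := heven.even_add_odd (f := fun n : ℕ ↦ 1 / (n : ℝ) ^ 2) (by simpa using hodd.hasSum)
  have := hasSum_zeta_two.unique hsum
  convert hodd.hasSum using 1
  simp only [one_div] at this ⊢
  linarith

lemma poch_zero (x : ℝ) : poch x 0 = 1 := prod_range_zero _

lemma poch_succ (x : ℝ) (k : ℕ) : poch x (k + 1) = poch x k * (x + k) := prod_range_succ _ _

lemma poch_succ' (x : ℝ) (k : ℕ) : poch x (k + 1) = poch (x + 1) k * x := by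
  rw [poch, prod_range_succ']
  push_cast
  simp only [add_comm (1 : ℝ), add_assoc, add_zero, poch]

lemma poch_pos {x : ℝ} (hx : 0 < x) (k : ℕ) : 0 < poch x k :=
  prod_pos fun i _ ↦ by positivity

lemma poch_add_one (x : ℝ) (k : ℕ) : poch x k * (x + k) = poch (x + 1) k * x := by
  rw [← poch_succ, poch_succ']

noncomputable def wzKernel (n k : ℕ) : ℝ :=
  poch 1 n ^ 3 / (poch (3 / 2) n ^ 3 * 4 ^ n) * (poch (1 / 2) k / poch (n + 3 / 2) k) ^ 2

lemma wzKernel_nonneg (n k : ℕ) : 0 ≤ wzKernel n k := by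
  have := poch_pos one_pos n
  have := poch_pos (by norm_num : (0 : ℝ) < 3 / 2) n
  unfold wzKernel
  positivity

lemma wzKernel_zero_left (k : ℕ) : wzKernel 0 k = 1 / (2 * (k : ℝ) + 1) ^ 2 := by
  have h := poch_add_one (1 / 2) k
  have := poch_pos (by norm_num : (0 : ℝ) < 3 / 2) k
  norm_num at h
  simp only [wzKernel, poch_zero, CharP.cast_eq_zero, zero_add]
  field_simp
  rw [← show poch (1 / 2) k * (2 * k + 1) = poch (3 / 2) k by linarith]
  ring

lemma wzKernel_succ_right (n k : ℕ) :
    wzKernel n (k + 1) = wzKernel n k * ((k + 1 / 2) / (n + k + 3 / 2)) ^ 2 := by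
  have := poch_pos (by positivity : (0 : ℝ) < n + 3 / 2) k
  simp only [wzKernel, poch_succ]
  field_simp
  ring

lemma wzKernel_succ_left (n k : ℕ) :
    wzKernel (n + 1) k =
      wzKernel n k * ((n + 1) ^ 3 / (4 * (n + 3 / 2) * (n + k + 3 / 2) ^ 2)) := by
  have h := poch_add_one ((n : ℝ) + 3 / 2) k
  have := poch_pos (by positivity : (0 : ℝ) < n + 3 / 2) k
  have := poch_pos (by norm_num : (0 : ℝ) < 3 / 2) n
  have := poch_pos one_pos n
  rw [show (n : ℝ) + 3 / 2 + 1 = (n + 1 : ℕ) + 3 / 2 by push_cast; ring] at h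
  rw [wzKernel, wzKernel, poch_succ 1, poch_succ (3 / 2), pow_succ,
    eq_div_of_mul_eq (by positivity) h.symm]
  field_simp
  ring

lemma wzKernel_wz_identity (n k : ℕ) :
    2 * (2 * (n : ℝ) + 1) * wzKernel n k - 2 * (2 * ((n + 1 : ℕ) : ℝ) + 1) * wzKernel (n + 1) k =
      (3 * n + 2 * k + 2) * wzKernel n k -
        (3 * n + 2 * ((k + 1 : ℕ) : ℝ) + 2) * wzKernel n (k + 1) := by
  rw [wzKernel_succ_left, wzKernel_succ_right]
  push_cast
  field_simp
  ring

lemma wzKernel_le_pow_mul (n k : ℕ) : wzKernel n k ≤ (1 / 4) ^ n * wzKernel 0 k := by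
  induction n with
  | zero => simp
  | succ n ih =>
    have ratio : ((n : ℝ) + 1) ^ 3 / (4 * (n + 3 / 2) * (n + k + 3 / 2) ^ 2) ≤ 1 / 4 := by
      rw [div_le_iff₀ (by positivity)]
      have h1 : (n : ℝ) + 1 ≤ n + 3 / 2 := by linarith
      have h2 : (n : ℝ) + 1 ≤ n + k + 3 / 2 := by linarith [(k.cast_nonneg : (0 : ℝ) ≤ k)]
      have := mul_le_mul h1 (pow_le_pow_left₀ (by positivity) h2 2) (by positivity) (by positivity)
      nlinarith
    calc wzKernel (n + 1) k ≤ wzKernel n k * (1 / 4) := by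
          rw [wzKernel_succ_left]
          exact mul_le_mul_of_nonneg_left ratio (wzKernel_nonneg n k)
      _ ≤ (1 / 4) ^ (n + 1) * wzKernel 0 k := by
          rw [pow_succ]
          nlinarith

lemma hasSum_wzKernel_zero : HasSum (wzKernel 0) (π ^ 2 / 8) := by
  simpa only [← wzKernel_zero_left] using hasSum_one_div_odd_sq

lemma wzKernel_le_one_div_sq (n k : ℕ) : wzKernel n k ≤ 1 / (2 * (k : ℝ) + 1) ^ 2 := by
  rw [← wzKernel_zero_left]
  calc wzKernel n k ≤ (1 / 4) ^ n * wzKernel 0 k := wzKernel_le_pow_mul n k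
    _ ≤ wzKernel 0 k :=
      mul_le_of_le_one_left (wzKernel_nonneg 0 k) (pow_le_one₀ (by norm_num) (by norm_num))

lemma summable_wzKernel (n : ℕ) : Summable (wzKernel n) :=
  (hasSum_wzKernel_zero.summable.mul_left ((1 / 4) ^ n)).of_nonneg_of_le (wzKernel_nonneg n)
    (wzKernel_le_pow_mul n)

lemma tsum_wzKernel_le_pow_mul (n : ℕ) : ∑' k, wzKernel n k ≤ (1 / 4) ^ n * (π ^ 2 / 8) :=
  hasSum_le (wzKernel_le_pow_mul n) (summable_wzKernel n).hasSum (hasSum_wzKernel_zero.mul_left _)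

lemma tendsto_tsum_wzKernel :
    Tendsto (fun n : ℕ ↦ ∑' k, 2 * (2 * (n : ℝ) + 1) * wzKernel n k) atTop (𝓝 0) := by
  have hgeom : Tendsto (fun n : ℕ ↦ (4 * (n * (1 / 4 : ℝ) ^ n) + 2 * (1 / 4) ^ n) * (π ^ 2 / 8))
      atTop (𝓝 0) := by
    have hlin := tendsto_self_mul_const_pow_of_lt_one (r := 1 / 4) (by norm_num) (by norm_num)
    have hpow :=
      tendsto_pow_atTop_nhds_zero_of_lt_one (r := (1 / 4 : ℝ)) (by norm_num) (by norm_num)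
    simpa using ((hlin.const_mul 4).add (hpow.const_mul 2)).mul_const (π ^ 2 / 8)
  refine squeeze_zero (fun n ↦ tsum_nonneg fun k ↦ by have := wzKernel_nonneg n k; positivity)
    (fun n ↦ ?_) hgeom
  rw [tsum_mul_left]
  calc 2 * (2 * (n : ℝ) + 1) * ∑' k, wzKernel n k
      ≤ 2 * (2 * (n : ℝ) + 1) * ((1 / 4) ^ n * (π ^ 2 / 8)) := by
        gcongr
        exact tsum_wzKernel_le_pow_mul n
    _ = _ := by ring

lemma tendsto_mul_wzKernel_atTop (n : ℕ) :
    Tendsto (fun k : ℕ ↦ (3 * (n : ℝ) + 2 * k + 2) * wzKernel n k) atTop (𝓝 0) := by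
  have hlim := (tendsto_one_div_add_atTop_nhds_zero_nat (𝕜 := ℝ)).const_mul (3 * (n : ℝ) + 2)
  rw [mul_zero] at hlim
  refine squeeze_zero (fun k ↦ by have := wzKernel_nonneg n k; positivity) (fun k ↦ ?_) hlim
  calc (3 * (n : ℝ) + 2 * k + 2) * wzKernel n k
      ≤ (3 * (n : ℝ) + 2 * k + 2) * (1 / (2 * (k : ℝ) + 1) ^ 2) := by
        gcongr
        exact wzKernel_le_one_div_sq n k
    _ ≤ (3 * (n : ℝ) + 2) * (1 / ((k : ℝ) + 1)) := by
        rw [mul_one_div, mul_one_div, div_le_div_iff₀ (by positivity) (by positivity)]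
        have hn : (0 : ℝ) ≤ n := n.cast_nonneg
        have hk : (0 : ℝ) ≤ k := k.cast_nonneg
        nlinarith [mul_nonneg hk hn, mul_nonneg (mul_nonneg hk hk) hn]

lemma term_eq_wzKernel (k : ℕ) :
    poch 1 k ^ 3 / poch (3 / 2) k ^ 3 * (3 * (k : ℝ) + 2) / 4 ^ k = (3 * k + 2) * wzKernel k 0 := by
  simp only [wzKernel, poch_zero, div_one, one_pow, mul_one]
  ring

theorem stmt15 :
    Tendsto (fun N => ∑ k ∈ range N,
      (poch 1 k) ^ 3 / (poch (3/2) k) ^ 3 * (3 * (k : ℝ) + 2) / 4 ^ k)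
      atTop (nhds (Real.pi ^ 2 / 4)) := by
  have hT0 : ∑' k, 2 * (2 * ((0 : ℕ) : ℝ) + 1) * wzKernel 0 k = π ^ 2 / 4 := by
    rw [tsum_mul_left, hasSum_wzKernel_zero.tsum_eq]
    ring
  have h := tendsto_sum_range_of_wz (F := fun n k ↦ 2 * (2 * (n : ℝ) + 1) * wzKernel n k)
    (G := fun n k ↦ (3 * (n : ℝ) + 2 * k + 2) * wzKernel n k)
    (fun n ↦ (summable_wzKernel n).mul_left _) wzKernel_wz_identity tendsto_mul_wzKernel_atTop
    tendsto_tsum_wzKernel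
  rw [hT0] at h
  simpa only [Nat.cast_zero, mul_zero, add_zero, term_eq_wzKernel] using h
end
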